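/- Define v(m) = μ^m (ν/μ;q)_m/(q;q)_m and s_{n,k} = ∑_{m=0}^{k} v(m) (μ;q)_{n-m-1} / (ν^m (ν;q)_{n-m}). Then s_{n,k} = (1/(1-νq^{n-1})) · (μ/(μ-ν)) · (μ/ν)^k · (μ;q)_{n-k-1}(ν/μ;q)_{k+1} / ((q;q)_k (ν;q)_{n-k-1}) for all 0 ≤ k ≤ n-1. -/
import Mathlib


/-- The q-Pochhammer symbol `(a;q)_n = ∏_{j=0}^{n-1} (1 - a q^j)`. -/
noncomputable def qPoch (a q : ℂ) (n : ℕ) : ℂ := ∏ j ∈ Finset.range n, (1 - a * q ^ j)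

lemma qPoch_succ (a q : ℂ) (n : ℕ) : qPoch a q (n + 1) = qPoch a q n * (1 - a * q ^ n) :=
  Finset.prod_range_succ _ _

lemma qPoch_zero (a q : ℂ) : qPoch a q 0 = 1 := rfl

set_option maxHeartbeats 1000000 in
lemma aux_step (μ ν P R Qk Nd U V A B : ℂ) (hμ : μ ≠ 0) (hν : ν ≠ 0) (hμν' : μ - ν ≠ 0)
    (hQk : Qk ≠ 0) (hNd : Nd ≠ 0) (hV0 : V ≠ 0)
    (h2 : 1 - A ≠ 0) (h1 : 1 - ν * B ≠ 0) (hnq : 1 - ν * (A * B) ≠ 0) :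
    (1 - ν * (A * B))⁻¹ * (μ / (μ - ν)) * (U / V) *
        (P * (1 - μ * B) * R / (Qk * (Nd * (1 - ν * B)))) +
      U * μ * R / (Qk * (1 - A)) * P / (V * ν * (Nd * (1 - ν * B))) =
    (1 - ν * (A * B))⁻¹ * (μ / (μ - ν)) * (U * μ / (V * ν)) *
      (P * (R * (1 - ν / μ * A)) / (Qk * (1 - A) * Nd)) := by
  have hμA : 1 - ν / μ * A = (μ - ν * A) / μ := by field_simp
  rw [hμA]
  simp only [inv_mul_eq_div, div_mul_eq_mul_div, mul_div_assoc', div_div, div_mul_div_comm]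
  rw [div_add_div _ _ (by apply_rules [mul_ne_zero]) (by apply_rules [mul_ne_zero]),
    div_eq_div_iff (by apply_rules [mul_ne_zero]) (by apply_rules [mul_ne_zero])]
  ring

set_option maxHeartbeats 1000000 in
/-- Partial sum identity: with `v(m) = μ^m (ν/μ;q)_m/(q;q)_m` and
`s_{n,k} = ∑_{m=0}^{k} v(m)(μ;q)_{n-m-1}/(ν^m (ν;q)_{n-m})`, one has
`s_{n,k} = (1-νq^{n-1})⁻¹ (μ/(μ-ν)) (μ/ν)^k (μ;q)_{n-k-1}(ν/μ;q)_{k+1}/((q;q)_k (ν;q)_{n-k-1})`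
for all `0 ≤ k ≤ n-1`. -/
theorem partial_sum_identity (q μ ν : ℂ) (hμ : μ ≠ 0) (hν : ν ≠ 0) (hμν : μ ≠ ν)
    (n k : ℕ) (hk : k ≤ n - 1) (hn : 1 ≤ n)
    (hnq : 1 - ν * q ^ (n - 1) ≠ 0)
    (hqq : ∀ j ≤ n, qPoch q q j ≠ 0) (hνp : ∀ j ≤ n, qPoch ν q j ≠ 0) :
    ∑ m ∈ Finset.range (k + 1),
      (μ ^ m * qPoch (ν / μ) q m / qPoch q q m) * qPoch μ q (n - m - 1) /
        (ν ^ m * qPoch ν q (n - m))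
    = (1 - ν * q ^ (n - 1))⁻¹ * (μ / (μ - ν)) * (μ / ν) ^ k *
        (qPoch μ q (n - k - 1) * qPoch (ν / μ) q (k + 1) /
          (qPoch q q k * qPoch ν q (n - k - 1))) := by
  have hμν' : μ - ν ≠ 0 := sub_ne_zero.mpr hμν
  induction k with
  | zero =>
    obtain ⟨d, rfl⟩ : ∃ d, n = d + 1 := ⟨n - 1, by omega⟩
    rw [zero_add, Finset.sum_range_one]
    simp only [Nat.sub_zero, Nat.add_sub_cancel] at hnq ⊢
    have hNd : qPoch ν q d ≠ 0 := hνp d (by omega)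
    have hNd1 : qPoch ν q (d + 1) ≠ 0 := hνp (d + 1) le_rfl
    rw [qPoch_succ ν q d] at hNd1 ⊢
    have h1 : (1 : ℂ) - ν * q ^ d ≠ 0 := fun h => hNd1 (by rw [h, mul_zero])
    rw [qPoch_succ (ν / μ) q 0, qPoch_zero, qPoch_zero]
    rw [pow_zero, pow_zero, pow_zero]
    field_simp
  | succ k ih =>
    have hk' : k ≤ n - 1 := by omega
    rw [Finset.sum_range_succ, ih hk']
    obtain ⟨d, rfl⟩ : ∃ d, n = k + 2 + d := ⟨n - k - 2, by omega⟩
    have e1 : k + 2 + d - (k + 1) - 1 = d := by omega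
    have e2 : k + 2 + d - (k + 1) = d + 1 := by omega
    have e3 : k + 2 + d - k - 1 = d + 1 := by omega
    have e5 : k + 2 + d - 1 = k + 1 + d := by omega
    rw [e5] at hnq
    rw [e1, e2, e3, e5]
    have hQk : qPoch q q k ≠ 0 := hqq k (by omega)
    have hQk1 : qPoch q q (k + 1) ≠ 0 := hqq (k + 1) (by omega)
    have hNd : qPoch ν q d ≠ 0 := hνp d (by omega)
    have hNd1 : qPoch ν q (d + 1) ≠ 0 := hνp (d + 1) (by omega)
    rw [qPoch_succ ν q d] at hNd1
    have h1 : (1 : ℂ) - ν * q ^ d ≠ 0 := fun h => hNd1 (by rw [h, mul_zero])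
    rw [qPoch_succ q q k] at hQk1
    have h2 : (1 : ℂ) - q * q ^ k ≠ 0 := fun h => hQk1 (by rw [h, mul_zero])
    rw [qPoch_succ ν q d, qPoch_succ μ q d, qPoch_succ q q k,
      qPoch_succ (ν / μ) q (k + 1)]
    have hq1 : q * q ^ k = q ^ (k + 1) := by rw [pow_succ]; ring
    rw [hq1] at h2 ⊢
    have hpow : q ^ (k + 1 + d) = q ^ (k + 1) * q ^ d := pow_add q (k + 1) d
    rw [hpow] at hnq ⊢
    simp only [div_pow]
    rw [pow_succ μ k, pow_succ ν k]
    have hV0 : ν ^ k ≠ 0 := pow_ne_zero _ hν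
    generalize qPoch μ q d = P
    generalize qPoch (ν / μ) q (k + 1) = R
    generalize hQg : qPoch q q k = Qk at hQk ⊢
    generalize hNg : qPoch ν q d = Nd at hNd ⊢
    generalize μ ^ k = U
    generalize hVg : ν ^ k = V at hV0 ⊢
    generalize hAg : q ^ (k + 1) = A at h2 hnq ⊢
    generalize hBg : q ^ d = B at h1 hnq ⊢
    exact aux_step μ ν P R Qk Nd U V A B hμ hν hμν' hQk hNd hV0 h2 h1 hnq
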